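/- For every real number x with x > 1/3 and every real number z with z > 3x + √(9x² − 1), the series ∑_{n=0}^∞ ((−1)^n/(2n+1)) · B_{2n+1}(x)/z^{2n+1} converges and equals (1/(2√(9x² − 1))) · arctan(2√(9x² − 1)·z / (z² + 1)). -/

import Mathlib

/-- Balancing polynomials: `B 0 x = 0`, `B 1 x = 1`,
`B (n+2) x = 6 x B (n+1) x - B n x`. -/
def balancing (x : ℝ) : ℕ → ℝ
  | 0 => 0
  | 1 => 1
  | n + 2 => 6 * x * balancing x (n + 1) - balancing x n

lemma balancing_binet (x s : ℝ) (hs : s ^ 2 = 9 * x ^ 2 - 1) :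
    ∀ n, balancing x n * (2 * s) = (3 * x + s) ^ n - (3 * x - s) ^ n := by
  have key : ∀ n, balancing x n * (2 * s) = (3 * x + s) ^ n - (3 * x - s) ^ n ∧
      balancing x (n + 1) * (2 * s) = (3 * x + s) ^ (n + 1) - (3 * x - s) ^ (n + 1) := by
    intro n
    induction n with
    | zero => constructor <;> simp [balancing] <;> ring
    | succ k ih =>
      refine ⟨ih.2, ?_⟩
      have h2 : balancing x (k + 2) = 6 * x * balancing x (k + 1) - balancing x k := rfl
      rw [h2]
      have e1 : (3 * x + s) ^ (k + 2) = (3 * x + s) ^ k * ((3 * x + s) ^ 2) := by ring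
      have e2 : (3 * x - s) ^ (k + 2) = (3 * x - s) ^ k * ((3 * x - s) ^ 2) := by ring
      have a2 : (3 * x + s) ^ 2 = 6 * x * (3 * x + s) - 1 := by nlinarith [hs]
      have b2 : (3 * x - s) ^ 2 = 6 * x * (3 * x - s) - 1 := by nlinarith [hs]
      rw [e1, e2, a2, b2]
      have h3 : (3 * x + s) ^ (k + 1) = (3 * x + s) ^ k * (3 * x + s) := by ring
      have h4 : (3 * x - s) ^ (k + 1) = (3 * x - s) ^ k * (3 * x - s) := by ring
      have ih1 := ih.1
      have ih2 := ih.2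
      rw [h3, h4] at ih2
      linear_combination 6 * x * ih2 - ih1
  exact fun n => (key n).1

theorem balancing_arctan_series (x z : ℝ) (hx : x > 1 / 3)
    (hz : z > 3 * x + Real.sqrt (9 * x ^ 2 - 1)) :
    HasSum
      (fun n : ℕ => (-1 : ℝ) ^ n / (2 * (n : ℝ) + 1) *
        (balancing x (2 * n + 1) / z ^ (2 * n + 1)))
      (1 / (2 * Real.sqrt (9 * x ^ 2 - 1)) *
        Real.arctan (2 * Real.sqrt (9 * x ^ 2 - 1) * z / (z ^ 2 + 1))) := by
  set s := Real.sqrt (9 * x ^ 2 - 1) with hs_def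
  have hx0 : (0 : ℝ) < x := by linarith
  have hnn : (0 : ℝ) ≤ 9 * x ^ 2 - 1 := by nlinarith
  have hs2 : s ^ 2 = 9 * x ^ 2 - 1 := Real.sq_sqrt hnn
  have hs0 : 0 ≤ s := Real.sqrt_nonneg _
  have hslt : s < 3 * x := by nlinarith
  have hβ : (0 : ℝ) < 3 * x - s := by linarith
  have hα : (0 : ℝ) < 3 * x + s := by linarith
  have hz0 : (0 : ℝ) < z := lt_trans hα hz
  have ha1 : ‖(3 * x + s) / z‖ < 1 := by
    rw [Real.norm_eq_abs, abs_div, abs_of_pos hα, abs_of_pos hz0, div_lt_one hz0]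
    exact hz
  have hb1 : ‖(3 * x - s) / z‖ < 1 := by
    rw [Real.norm_eq_abs, abs_div, abs_of_pos hβ, abs_of_pos hz0, div_lt_one hz0]
    linarith
  have ha := Real.hasSum_arctan ha1
  have hb := Real.hasSum_arctan hb1
  have hsum := (ha.sub hb).div_const (2 * s)
  have hαβ : (3 * x + s) * (3 * x - s) = 1 := by nlinarith
  have hspos : (0 : ℝ) < s := by
    rcases hs0.lt_or_eq with h | h
    · exact h
    · exfalso; nlinarith
  have hzne : z ≠ 0 := ne_of_gt hz0
  have hz21 : (0 : ℝ) < z ^ 2 + 1 := by positivity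
  -- identify the function
  have hfun : (fun n : ℕ =>
      ((-1) ^ n * ((3 * x + s) / z) ^ (2 * n + 1) / ((2 * n + 1 : ℕ) : ℝ) -
       (-1) ^ n * ((3 * x - s) / z) ^ (2 * n + 1) / ((2 * n + 1 : ℕ) : ℝ)) / (2 * s)) =
      (fun n : ℕ => (-1 : ℝ) ^ n / (2 * (n : ℝ) + 1) *
        (balancing x (2 * n + 1) / z ^ (2 * n + 1))) := by
    funext n
    have hbin := balancing_binet x s hs2 (2 * n + 1)
    have hB : balancing x (2 * n + 1) =
        ((3 * x + s) ^ (2 * n + 1) - (3 * x - s) ^ (2 * n + 1)) / (2 * s) := by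
      field_simp at hbin ⊢
      linarith [hbin]
    rw [hB]
    have hc : ((2 * n + 1 : ℕ) : ℝ) = 2 * (n : ℝ) + 1 := by push_cast; ring
    rw [div_pow, div_pow, hc]
    have hcne : (2 * (n : ℝ) + 1) ≠ 0 := by positivity
    field_simp
  rw [hfun] at hsum
  -- identify the value
  have hval : (Real.arctan ((3 * x + s) / z) - Real.arctan ((3 * x - s) / z)) / (2 * s) =
      1 / (2 * s) * Real.arctan (2 * s * z / (z ^ 2 + 1)) := by
    have key : (3 * x + s) / z * ((3 * x - s) / z) = 1 / z ^ 2 := by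
      rw [div_mul_div_comm, hαβ]; ring_nf
    have hcond : ((3 * x + s) / z) * (-((3 * x - s) / z)) < 1 := by
      rw [mul_neg, key]
      have : (0 : ℝ) < 1 / z ^ 2 := by positivity
      linarith
    have harc := Real.arctan_add hcond
    rw [Real.arctan_neg] at harc
    have heq : ((3 * x + s) / z + -((3 * x - s) / z)) /
        (1 - (3 * x + s) / z * -((3 * x - s) / z)) = 2 * s * z / (z ^ 2 + 1) := by
      rw [mul_neg, key, sub_neg_eq_add]
      rw [show (3 * x + s) / z + -((3 * x - s) / z) = 2 * s / z by ring]
      field_simp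
    rw [heq] at harc
    rw [show Real.arctan ((3*x+s)/z) + -Real.arctan ((3*x-s)/z) =
      Real.arctan ((3*x+s)/z) - Real.arctan ((3*x-s)/z) from by ring] at harc
    rw [harc]
    ring
  rw [hval] at hsum
  exact hsum
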